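/- arXiv:1701.02000 — 4 statements merged into one kernel-verified Lean document; each statement's English description precedes it below -/
import Mathlib

section
/- For n ≥ 2, the eccentricity Laplacian energy of K_{n,n} equals 2n, i.e., Σ_{i=1}^{2n} |μ'_i - ζ(K_{n,n})/(2n)| = 2n, where μ'_i are the eigenvalues of L_ε(K_{n,n}) and ζ(K_{n,n}) = 4n. -/
open Finset
open Matrix

lemma sum_eigenvalues_eq_trace' {m : Type*} [Fintype m] [DecidableEq m]
    (A : Matrix m m ℝ) (hA : A.IsHermitian) :
    ∑ i, hA.eigenvalues i = A.trace := by
  set U := (hA.eigenvectorUnitary : Matrix m m ℝ)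
  set D := Matrix.diagonal (RCLike.ofReal ∘ hA.eigenvalues : m → ℝ) with hD
  have hUU : star U * U = 1 := Unitary.coe_star_mul_self _
  calc ∑ i, hA.eigenvalues i = D.trace := by
        simp [hD, Matrix.trace, Matrix.diag]
    _ = (star U * (U * D)).trace := by rw [← Matrix.mul_assoc, hUU, Matrix.one_mul]
    _ = ((U * D) * star U).trace := Matrix.trace_mul_comm _ _
    _ = A.trace := by rw [show A = U * D * star U from hA.spectral_theorem]

lemma sum_sq_eigenvalues' {m : Type*} [Fintype m] [DecidableEq m]
    (A : Matrix m m ℝ) (hA : A.IsHermitian) :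
    ∑ i, (hA.eigenvalues i)^2 = (A * A).trace := by
  set U := (hA.eigenvectorUnitary : Matrix m m ℝ)
  set D := Matrix.diagonal (RCLike.ofReal ∘ hA.eigenvalues : m → ℝ) with hD
  have hUU : star U * U = 1 := Unitary.coe_star_mul_self _
  have h : A = U * D * star U := hA.spectral_theorem
  have key : (U * D * star U) * (U * D * star U) = U * (D * D) * star U := by
    simp only [Matrix.mul_assoc]
    rw [← Matrix.mul_assoc (star U) U, hUU, Matrix.one_mul]
  calc ∑ i, (hA.eigenvalues i)^2 = (D * D).trace := by
        simp [hD, Matrix.trace, Matrix.diag, Matrix.diagonal_mul_diagonal, sq]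
    _ = (star U * (U * (D * D))).trace := by
        rw [← Matrix.mul_assoc, hUU, Matrix.one_mul]
    _ = ((U * (D * D)) * star U).trace := Matrix.trace_mul_comm _ _
    _ = (A * A).trace := by rw [h, key]

/-- the eccentricity Laplacian energy of `K_{n,n}` equals `2n`:
`Σ_i |μ'_i - ζ(K_{n,n})/(2n)| = 2n`, where `ζ(K_{n,n})/(2n) = 2`. -/
theorem eccLaplacianEnergy_completeBipartite (n : ℕ) (hn : 2 ≤ n)
    (M : Matrix (Fin n ⊕ Fin n) (Fin n ⊕ Fin n) ℝ)
    (hM : ∀ i j, M i j =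
      if i = j then 2 else if i.isLeft = j.isLeft then 0 else -1)
    (hH : M.IsHermitian) :
    ∑ i, |hH.eigenvalues i - 2| = 2 * (n : ℝ) := by
  have hn0 : (0:ℝ) < n := by positivity
  set N : Matrix (Fin n ⊕ Fin n) (Fin n ⊕ Fin n) ℝ :=
    Matrix.of (fun i j => if i.isLeft = j.isLeft then 0 else -1) with hNdef
  have hMN : M = N + (2:ℝ) • (1 : Matrix (Fin n ⊕ Fin n) (Fin n ⊕ Fin n) ℝ) := by
    ext i j
    rw [hM]
    by_cases h : i = j
    · subst h; simp [hNdef]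
    · simp [hNdef, h, Matrix.one_apply]
  -- N * N * N = n^2 • N
  have hQ : N * N = (n:ℝ) • Matrix.of
      (fun i j : Fin n ⊕ Fin n => if i.isLeft = j.isLeft then (1:ℝ) else 0) := by
    ext i j
    simp only [Matrix.mul_apply, Matrix.smul_apply, Matrix.of_apply, hNdef]
    rw [Fintype.sum_sum_type]
    rcases i with a | a <;> rcases j with b | b <;>
      simp [Finset.sum_const, mul_comm]
  have hN3 : N * N * N = ((n:ℝ)^2) • N := by
    rw [hQ, Matrix.smul_mul]
    rw [show ((n:ℝ)^2) • N = (n:ℝ) • ((n:ℝ) • N) by rw [smul_smul]; ring_nf]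
    congr 1
    ext i j
    simp only [Matrix.mul_apply, Matrix.smul_apply, Matrix.of_apply, hNdef]
    rw [Fintype.sum_sum_type]
    rcases i with a | a <;> rcases j with b | b <;>
      simp [Finset.sum_const, mul_comm]
  -- each eigenvalue satisfies the cubic
  have hcube : ∀ i, (hH.eigenvalues i - 2)^3 = (n:ℝ)^2 * (hH.eigenvalues i - 2) := by
    intro i
    set μ := hH.eigenvalues i
    set v : (Fin n ⊕ Fin n) → ℝ := ⇑(hH.eigenvectorBasis i) with hv
    have hvM : M *ᵥ v = μ • v := hH.mulVec_eigenvectorBasis i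
    have hvN : N *ᵥ v = (μ - 2) • v := by
      have : N = M - (2:ℝ) • 1 := by rw [hMN, add_sub_cancel_right]
      rw [this, Matrix.sub_mulVec, hvM, Matrix.smul_mulVec, Matrix.one_mulVec,
        sub_smul]
    have h3 : (N * N * N) *ᵥ v = ((μ - 2)^3) • v := by
      simp only [← Matrix.mulVec_mulVec, hvN, Matrix.mulVec_smul, smul_smul]
      congr 1
      ring
    rw [hN3, Matrix.smul_mulVec, hvN, smul_smul] at h3
    have hb := hH.eigenvectorBasis.orthonormal.ne_zero i
    have hv0 : v ≠ 0 := by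
      intro h
      exact hb (by ext j; exact congrFun h j)
    obtain ⟨j, hj⟩ := Function.ne_iff.mp hv0
    have hc := congrFun h3 j
    simp only [Pi.smul_apply, smul_eq_mul] at hc
    have hj' : v j ≠ 0 := hj
    exact (mul_right_cancel₀ hj' hc).symm
  -- |μ - 2| = (μ-2)^2 / n
  have habs : ∀ i, |hH.eigenvalues i - 2| = (hH.eigenvalues i - 2)^2 / n := by
    intro i
    set x := hH.eigenvalues i - 2
    have h := hcube i
    have hfac : x * (x^2 - (n:ℝ)^2) = 0 := by ring_nf; linarith [h]
    rcases mul_eq_zero.mp hfac with hx | hx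
    · simp [hx]
    · have hx2 : x^2 = (n:ℝ)^2 := by linarith
      have : |x| = n := by
        rw [← Real.sqrt_sq_eq_abs, hx2, Real.sqrt_sq hn0.le]
      rw [this, hx2]
      field_simp
  rw [Finset.sum_congr rfl (fun i _ => habs i), ← Finset.sum_div]
  -- compute the sum of squares
  have hsum : ∑ i, hH.eigenvalues i = 4 * n := by
    rw [sum_eigenvalues_eq_trace' M hH]
    simp [Matrix.trace, Matrix.diag, hM, Fintype.sum_sum_type]
    ring
  have hsq : ∑ i, (hH.eigenvalues i)^2 = 2 * (n:ℝ)^2 + 8 * n := by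
    rw [sum_sq_eigenvalues' M hH]
    have key : ∀ (i : Fin n ⊕ Fin n), ∑ j, M i j * M j i = 4 + (n:ℝ) := by
      intro i
      rw [Fintype.sum_sum_type]
      rcases i with a | a
      · have e1 : ∀ b : Fin n, M (Sum.inl a) (Sum.inl b) * M (Sum.inl b) (Sum.inl a)
            = if b = a then 4 else 0 := by
          intro b
          rw [hM, hM]
          by_cases h : b = a
          · subst h; norm_num
          · simp [h, Ne.symm h, Sum.inl.injEq]
        simp only [e1]
        have e2 : ∀ b : Fin n, M (Sum.inl a) (Sum.inr b) * M (Sum.inr b) (Sum.inl a) = 1 := by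
          intro b; rw [hM, hM]; simp
        simp [e2, Finset.sum_ite_eq', Finset.sum_const]
      · have e1 : ∀ b : Fin n, M (Sum.inr a) (Sum.inr b) * M (Sum.inr b) (Sum.inr a)
            = if b = a then 4 else 0 := by
          intro b
          rw [hM, hM]
          by_cases h : b = a
          · subst h; norm_num
          · simp [h, Ne.symm h, Sum.inr.injEq]
        simp only [e1]
        have e2 : ∀ b : Fin n, M (Sum.inr a) (Sum.inl b) * M (Sum.inl b) (Sum.inr a) = 1 := by
          intro b; rw [hM, hM]; simp
        simp [e2, Finset.sum_ite_eq', Finset.sum_const, add_comm]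
    have htr : (M * M).trace = ∑ i : Fin n ⊕ Fin n, ∑ j, M i j * M j i := by
      simp [Matrix.trace, Matrix.diag, Matrix.mul_apply]
    rw [htr, Finset.sum_congr rfl (fun i _ => key i), Finset.sum_const]
    simp [Finset.card_univ]
    ring
  have expand : ∑ i, (hH.eigenvalues i - 2)^2 = 2 * (n:ℝ)^2 := by
    have hcard : (Fintype.card (Fin n ⊕ Fin n) : ℝ) = 2 * n := by simp; ring
    calc ∑ i, (hH.eigenvalues i - 2)^2
        = ∑ i, ((hH.eigenvalues i)^2 - 4 * hH.eigenvalues i + 4) := by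
          apply Finset.sum_congr rfl; intros; ring
      _ = (∑ i, (hH.eigenvalues i)^2) - 4 * (∑ i, hH.eigenvalues i)
            + 4 * (Fintype.card (Fin n ⊕ Fin n) : ℝ) := by
          rw [Finset.sum_add_distrib, Finset.sum_sub_distrib, ← Finset.mul_sum]
          simp [Finset.card_univ]; ring
      _ = 2 * (n:ℝ)^2 := by rw [hsum, hsq, hcard]; ring
  rw [expand]
  field_simp
end

section
/- For a connected simple graph G with n vertices and m edges, the eccentricity Laplacian energy satisfies LE_ε(G) ≥ 2√(m + (1/2)(E_1(G) - ζ(G)^2/n)). -/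
open Finset

lemma my_trace_eq_sum_eigenvalues {n : Type*} [Fintype n] [DecidableEq n]
    {A : Matrix n n ℝ} (hA : A.IsHermitian) :
    A.trace = ∑ i, hA.eigenvalues i := by
  conv_lhs => rw [hA.spectral_theorem, Unitary.conjStarAlgAut_apply]
  rw [Matrix.trace_mul_cycle]
  have h1 : (star (Matrix.IsHermitian.eigenvectorUnitary hA : Matrix n n ℝ)) *
      (Matrix.IsHermitian.eigenvectorUnitary hA : Matrix n n ℝ) = 1 :=
    Unitary.coe_star_mul_self _
  rw [h1, Matrix.one_mul, Matrix.trace_diagonal]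
  simp [RCLike.ofReal]

lemma my_trace_sq_eq_sum_eigenvalues_sq {n : Type*} [Fintype n] [DecidableEq n]
    {A : Matrix n n ℝ} (hA : A.IsHermitian) :
    (A * A).trace = ∑ i, (hA.eigenvalues i) ^ 2 := by
  have h1 : (star (Matrix.IsHermitian.eigenvectorUnitary hA : Matrix n n ℝ)) *
      (Matrix.IsHermitian.eigenvectorUnitary hA : Matrix n n ℝ) = 1 :=
    Unitary.coe_star_mul_self _
  set U := (Matrix.IsHermitian.eigenvectorUnitary hA : Matrix n n ℝ)
  set D : Matrix n n ℝ := Matrix.diagonal (RCLike.ofReal ∘ hA.eigenvalues) with hD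
  have h2 : A * A = U * (D * D) * star U := by
    conv_lhs => rw [hA.spectral_theorem, Unitary.conjStarAlgAut_apply]
    calc (U * D * star U) * (U * D * star U)
        = U * (D * ((star U * U) * (D * star U))) := by
          simp only [Matrix.mul_assoc]
      _ = U * (D * D) * star U := by rw [h1, Matrix.one_mul]; simp only [Matrix.mul_assoc]
  rw [h2, Matrix.trace_mul_cycle, ← Matrix.mul_assoc, h1, Matrix.one_mul]
  rw [hD, Matrix.diagonal_mul_diagonal, Matrix.trace_diagonal]
  simp [RCLike.ofReal, sq]

lemma my_sum_abs_sq {V : Type*} [Fintype V] (d : V → ℝ) (h : ∑ v, d v = 0) :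
    2 * ∑ v, d v ^ 2 ≤ (∑ v, |d v|) ^ 2 := by
  set P := ∑ v, max (d v) 0 with hP
  set N := ∑ v, max (-d v) 0 with hN
  have hP0 : 0 ≤ P := Finset.sum_nonneg fun v _ => le_max_right _ _
  have hN0 : 0 ≤ N := Finset.sum_nonneg fun v _ => le_max_right _ _
  have key : ∀ v, max (d v) 0 - max (-d v) 0 = d v := by
    intro v
    rcases le_total (d v) 0 with hv | hv
    · rw [max_eq_right hv, max_eq_left (by linarith)]; ring
    · rw [max_eq_left hv, max_eq_right (by linarith)]; ring
  have hPN : P - N = 0 := by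
    rw [hP, hN, ← Finset.sum_sub_distrib]
    simp only [key]
    exact h
  have habs : ∑ v, |d v| = P + N := by
    rw [hP, hN, ← Finset.sum_add_distrib]
    apply Finset.sum_congr rfl
    intro v _
    rcases le_total (d v) 0 with hv | hv
    · rw [max_eq_right hv, max_eq_left (by linarith), abs_of_nonpos hv]; ring
    · rw [max_eq_left hv, max_eq_right (by linarith), abs_of_nonneg hv]; ring
  have hsq : ∑ v, d v ^ 2 ≤ P ^ 2 + N ^ 2 := by
    have h1 : ∑ v, d v ^ 2 = (∑ v, (max (d v) 0) ^ 2) + ∑ v, (max (-d v) 0) ^ 2 := by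
      rw [← Finset.sum_add_distrib]
      apply Finset.sum_congr rfl
      intro v _
      rcases le_total (d v) 0 with hv | hv
      · rw [max_eq_right hv, max_eq_left (by linarith)]; ring
      · rw [max_eq_left hv, max_eq_right (by linarith)]; ring
    have h2 : (∑ v, (max (d v) 0) ^ 2) ≤ P ^ 2 :=
      Finset.sum_sq_le_sq_sum_of_nonneg fun v _ => le_max_right _ _
    have h3 : (∑ v, (max (-d v) 0) ^ 2) ≤ N ^ 2 :=
      Finset.sum_sq_le_sq_sum_of_nonneg fun v _ => le_max_right _ _
    linarith
  rw [habs]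
  nlinarith [sq_nonneg (P - N)]

/-- `LE_ε(G) ≥ 2√(m + (1/2)(E_1(G) - ζ(G)^2/n))`. -/
theorem eccLaplacianEnergy_lower_bound
    {V : Type*} [Fintype V] [DecidableEq V]
    (G : SimpleGraph V) [DecidableRel G.Adj] (hG : G.Connected)
    (ecc : V → ℕ) (hecc : ∀ v, ecc v = Finset.univ.sup fun u => G.dist v u)
    (m : ℕ) (hm : m = G.edgeFinset.card)
    (L : Matrix V V ℝ)
    (hL : L = Matrix.diagonal (fun v => (ecc v : ℝ)) - G.adjMatrix ℝ)
    (hH : L.IsHermitian) :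
    ∑ v, |hH.eigenvalues v - (∑ u, (ecc u : ℝ)) / Fintype.card V| ≥
      2 * Real.sqrt ((m : ℝ) +
        (1 / 2) * ((∑ v, (ecc v : ℝ) ^ 2) - (∑ v, (ecc v : ℝ)) ^ 2 / Fintype.card V)) := by
  have hne : Nonempty V := hG.nonempty
  have hn0 : (0:ℝ) < (Fintype.card V : ℝ) := by positivity
  set n : ℝ := (Fintype.card V : ℝ)
  set ζ : ℝ := ∑ u, (ecc u : ℝ) with hζ
  -- trace of L is ζ
  have htr : L.trace = ζ := by
    rw [hL, Matrix.trace_sub, Matrix.trace_diagonal, SimpleGraph.trace_adjMatrix, sub_zero]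
  -- trace of L² is Σ ecc² + 2m
  have htr2 : (L * L).trace = (∑ v, (ecc v : ℝ) ^ 2) + 2 * m := by
    have htrace : (L * L).trace = ∑ i, ∑ j, L i j * L j i := by
      simp [Matrix.trace, Matrix.mul_apply, Matrix.diag]
    rw [htrace]
    have hsplit : ∀ i : V, ∑ j, L i j * L j i
        = (ecc i : ℝ) ^ 2 + ∑ j, (G.adjMatrix ℝ) i j := by
      intro i
      have hpt : ∀ j, L i j * L j i
          = (if j = i then (ecc i : ℝ) ^ 2 else 0) + (G.adjMatrix ℝ) i j := by
        intro j
        by_cases hj : j = i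
        · subst hj
          simp [hL, sq]
        · have h1 : L i j = -(G.adjMatrix ℝ) i j := by
            simp [hL, Matrix.diagonal_apply_ne' _ hj]
          have h2 : L j i = -(G.adjMatrix ℝ) j i := by
            simp [hL, Matrix.diagonal_apply_ne _ hj]
          rw [h1, h2]
          by_cases hadj : G.Adj i j
          · simp [hadj, hadj.symm, hj]
          · simp [hadj, show ¬ G.Adj j i from fun h => hadj h.symm, hj]
      rw [Finset.sum_congr rfl fun j _ => hpt j, Finset.sum_add_distrib]
      congr 1
      simp
    rw [Finset.sum_congr rfl fun i _ => hsplit i, Finset.sum_add_distrib]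
    congr 1
    have hdeg : ∀ i : V, ∑ j, (G.adjMatrix ℝ) i j = (G.degree i : ℝ) := by
      intro i
      simp only [SimpleGraph.adjMatrix_apply]
      rw [Finset.sum_boole, SimpleGraph.degree, SimpleGraph.neighborFinset_eq_filter]
    rw [Finset.sum_congr rfl fun i _ => hdeg i, ← Nat.cast_sum,
      SimpleGraph.sum_degrees_eq_twice_card_edges, hm]
    push_cast
    ring
  -- the deviations
  set d : V → ℝ := fun v => hH.eigenvalues v - ζ / n with hd
  have hsum_eig : ∑ v, hH.eigenvalues v = ζ := by
    rw [← my_trace_eq_sum_eigenvalues hH, htr]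
  have hsum_eig2 : ∑ v, (hH.eigenvalues v) ^ 2 = (∑ v, (ecc v : ℝ) ^ 2) + 2 * m := by
    rw [← my_trace_sq_eq_sum_eigenvalues_sq hH, htr2]
  have hcard : (((Finset.univ : Finset V)).card : ℝ) = n := by simp [n]
  have hn0' : n ≠ 0 := ne_of_gt hn0
  have hd0 : ∑ v, d v = 0 := by
    simp only [hd, Finset.sum_sub_distrib, hsum_eig, Finset.sum_const, nsmul_eq_mul, hcard]
    field_simp
    ring
  have hd2 : ∑ v, d v ^ 2 = 2 * m + ((∑ v, (ecc v : ℝ) ^ 2) - ζ ^ 2 / n) := by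
    have hpt : ∀ v, d v ^ 2
        = hH.eigenvalues v ^ 2 - 2 * (ζ / n) * hH.eigenvalues v + (ζ/n)^2 := by
      intro v; simp only [hd]; ring
    rw [Finset.sum_congr rfl fun v _ => hpt v]
    rw [Finset.sum_add_distrib, Finset.sum_sub_distrib, ← Finset.mul_sum, hsum_eig, hsum_eig2,
      Finset.sum_const, nsmul_eq_mul, hcard]
    field_simp
    ring
  have hkey := my_sum_abs_sq d hd0
  have h4 : (4 : ℝ) * ((m : ℝ) + (1 / 2) * ((∑ v, (ecc v : ℝ) ^ 2) - ζ ^ 2 / n))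
      = 2 * ∑ v, d v ^ 2 := by rw [hd2]; ring
  have heq : 2 * Real.sqrt ((m : ℝ) + (1 / 2) * ((∑ v, (ecc v : ℝ) ^ 2) - ζ ^ 2 / n))
      = Real.sqrt (2 * ∑ v, d v ^ 2) := by
    rw [← h4, show (4:ℝ) = 2^2 by norm_num, ← Real.sqrt_sq (by norm_num : (0:ℝ) ≤ 2)]
    rw [← Real.sqrt_mul (by positivity), Real.sqrt_sq (by norm_num : (0:ℝ) ≤ 2)]
  rw [ge_iff_le, heq]
  calc Real.sqrt (2 * ∑ v, d v ^ 2) ≤ Real.sqrt ((∑ v, |d v|) ^ 2) :=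
        Real.sqrt_le_sqrt hkey
    _ = ∑ v, |d v| := Real.sqrt_sq (Finset.sum_nonneg fun v _ => abs_nonneg _)
end

section
/- For a connected simple graph G with n vertices and m edges, the eccentricity Laplacian energy satisfies LE_ε(G) ≤ √(n·E_1(G) - ζ(G)^2 + 2mn). -/
open Finset

private lemma sum_eigs_eq_trace' {V : Type*} [Fintype V] [DecidableEq V]
    (A : Matrix V V ℝ) (hA : A.IsHermitian) :
    ∑ i, hA.eigenvalues i = A.trace := by
  have huni : (star (hA.eigenvectorUnitary : Matrix V V ℝ)) *
      (hA.eigenvectorUnitary : Matrix V V ℝ) = 1 := Unitary.coe_star_mul_self _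
  conv_rhs => rw [hA.spectral_theorem, Unitary.conjStarAlgAut_apply]
  rw [Matrix.trace_mul_comm, ← mul_assoc, huni, one_mul]
  simp [Matrix.trace_diagonal]

private lemma sum_eigs_sq_eq_trace' {V : Type*} [Fintype V] [DecidableEq V]
    (A : Matrix V V ℝ) (hA : A.IsHermitian) :
    ∑ i, hA.eigenvalues i ^ 2 = (A * A).trace := by
  have huni : (star (hA.eigenvectorUnitary : Matrix V V ℝ)) *
      (hA.eigenvectorUnitary : Matrix V V ℝ) = 1 := Unitary.coe_star_mul_self _
  set U : Matrix V V ℝ := (hA.eigenvectorUnitary : Matrix V V ℝ) with hU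
  set D : Matrix V V ℝ := Matrix.diagonal (RCLike.ofReal ∘ hA.eigenvalues) with hD
  conv_rhs => rw [hA.spectral_theorem, Unitary.conjStarAlgAut_apply]
  rw [show (U * D * star U) * (U * D * star U) = U * D * (star U * U) * D * star U by
    simp [mul_assoc], huni, mul_one]
  rw [Matrix.trace_mul_comm, ← mul_assoc, ← mul_assoc, huni, one_mul, hD,
    Matrix.diagonal_mul_diagonal]
  simp [Matrix.trace_diagonal, sq]

/-- `LE_ε(G) ≤ √(n·E_1(G) - ζ(G)^2 + 2mn)`. -/
theorem eccLaplacianEnergy_upper_bound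
    {V : Type*} [Fintype V] [DecidableEq V]
    (G : SimpleGraph V) [DecidableRel G.Adj] (hG : G.Connected)
    (ecc : V → ℕ) (hecc : ∀ v, ecc v = Finset.univ.sup fun u => G.dist v u)
    (m : ℕ) (hm : m = G.edgeFinset.card)
    (L : Matrix V V ℝ)
    (hL : L = Matrix.diagonal (fun v => (ecc v : ℝ)) - G.adjMatrix ℝ)
    (hH : L.IsHermitian) :
    ∑ v, |hH.eigenvalues v - (∑ u, (ecc u : ℝ)) / Fintype.card V| ≤
      Real.sqrt ((Fintype.card V : ℝ) * (∑ v, (ecc v : ℝ) ^ 2)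
        - (∑ v, (ecc v : ℝ)) ^ 2 + 2 * m * Fintype.card V) := by
  have : Nonempty V := hG.nonempty
  set n : ℕ := Fintype.card V with hn
  have hn0 : (0 : ℝ) < n := by exact_mod_cast Fintype.card_pos
  set ζ : ℝ := ∑ u, (ecc u : ℝ) with hζ
  set c : ℝ := ζ / n with hc
  -- trace computations
  have htr : L.trace = ζ := by simp [hL, Matrix.trace_diagonal, hζ]
  have htr2 : (L * L).trace = (∑ v, (ecc v : ℝ) ^ 2) + 2 * m := by
    rw [hL, sub_mul, mul_sub, mul_sub, Matrix.trace_sub, Matrix.trace_sub, Matrix.trace_sub]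
    have h1 : (Matrix.diagonal (fun v => (ecc v : ℝ)) *
        Matrix.diagonal (fun v => (ecc v : ℝ))).trace = ∑ v, (ecc v : ℝ) ^ 2 := by
      simp [Matrix.diagonal_mul_diagonal, Matrix.trace_diagonal, sq]
    have h2 : (Matrix.diagonal (fun v => (ecc v : ℝ)) * G.adjMatrix ℝ).trace = 0 := by
      simp only [Matrix.trace, Matrix.diag_apply, Matrix.mul_apply, Matrix.diagonal_apply]
      refine Finset.sum_eq_zero fun x _ => Finset.sum_eq_zero fun y _ => ?_
      by_cases h : x = y
      · subst h; simp
      · simp [h]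
    have h3 : (G.adjMatrix ℝ * Matrix.diagonal (fun v => (ecc v : ℝ))).trace = 0 := by
      simp only [Matrix.trace, Matrix.diag_apply, Matrix.mul_apply, Matrix.diagonal_apply]
      refine Finset.sum_eq_zero fun x _ => Finset.sum_eq_zero fun y _ => ?_
      by_cases h : y = x
      · subst h; simp
      · simp [h]
    have h4 : (G.adjMatrix ℝ * G.adjMatrix ℝ).trace = 2 * m := by
      rw [Matrix.trace]
      simp only [Matrix.diag_apply, SimpleGraph.adjMatrix_mul_self_apply_self]
      rw [hm, ← Nat.cast_sum, SimpleGraph.sum_degrees_eq_twice_card_edges]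
      push_cast; ring
    rw [h1, h2, h3, h4]; ring
  have hsum : ∑ v, hH.eigenvalues v = ζ := by rw [sum_eigs_eq_trace' L hH, htr]
  have hsumsq : ∑ v, hH.eigenvalues v ^ 2 = (∑ v, (ecc v : ℝ) ^ 2) + 2 * m := by
    rw [sum_eigs_sq_eq_trace' L hH, htr2]
  -- the centered sum of squares
  have hS : ∑ v, (hH.eigenvalues v - c) ^ 2
      = (∑ v, (ecc v : ℝ) ^ 2) + 2 * m - ζ ^ 2 / n := by
    have : ∑ v, (hH.eigenvalues v - c) ^ 2
        = (∑ v, hH.eigenvalues v ^ 2) - 2 * c * (∑ v, hH.eigenvalues v) + n * c ^ 2 := by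
      rw [Finset.sum_congr rfl (fun v _ => by ring :
        ∀ v ∈ Finset.univ, (hH.eigenvalues v - c) ^ 2
          = hH.eigenvalues v ^ 2 - 2 * c * hH.eigenvalues v + c ^ 2)]
      rw [Finset.sum_add_distrib, Finset.sum_sub_distrib, ← Finset.mul_sum,
        Finset.sum_const, Finset.card_univ, nsmul_eq_mul]
    rw [this, hsum, hsumsq, hc]
    field_simp
    ring
  -- Cauchy–Schwarz
  have hCS : (∑ v, |hH.eigenvalues v - c|) ^ 2 ≤ n * ∑ v, (hH.eigenvalues v - c) ^ 2 := by
    have := sq_sum_le_card_mul_sum_sq (s := (Finset.univ : Finset V))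
      (f := fun v => |hH.eigenvalues v - c|)
    simpa [Finset.card_univ, sq_abs] using this
  have hkey : (n : ℝ) * ∑ v, (hH.eigenvalues v - c) ^ 2
      = (n : ℝ) * (∑ v, (ecc v : ℝ) ^ 2) - ζ ^ 2 + 2 * m * n := by
    rw [hS]; field_simp; ring
  calc ∑ v, |hH.eigenvalues v - c|
      = Real.sqrt ((∑ v, |hH.eigenvalues v - c|) ^ 2) := by
        rw [Real.sqrt_sq (Finset.sum_nonneg fun v _ => abs_nonneg _)]
    _ ≤ Real.sqrt ((n : ℝ) * ∑ v, (hH.eigenvalues v - c) ^ 2) :=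
        Real.sqrt_le_sqrt hCS
    _ = _ := by rw [hkey]
end

section
/- Let G be a connected simple graph with n vertices and m edges, ν'_i = μ'_i - ζ(G)/n for the eigenvalues μ'_i of L_ε(G), and let ν'_max and ν'_min denote the maximum and minimum of |ν'_i|. Then LE_ε(G) ≥ √(n·E_1(G) - ζ(G)^2 + 2mn - (n²/4)(ν'_max - ν'_min)²). -/
set_option maxHeartbeats 1000000

open Finset Matrix

lemma trace_eq_sum_eigs {n : Type*} [Fintype n] [DecidableEq n]
    (A : Matrix n n ℝ) (hA : A.IsHermitian) :
    A.trace = ∑ i, hA.eigenvalues i := by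
  have h1 : star (hA.eigenvectorUnitary : Matrix n n ℝ) * (hA.eigenvectorUnitary : Matrix n n ℝ) = 1 :=
    Matrix.UnitaryGroup.star_mul_self hA.eigenvectorUnitary
  conv_lhs => rw [hA.spectral_theorem]
  rw [Unitary.conjStarAlgAut_apply, Matrix.trace_mul_cycle, h1, Matrix.one_mul, Matrix.trace_diagonal]
  simp

lemma trace_sq_eq_sum_eigs_sq {n : Type*} [Fintype n] [DecidableEq n]
    (A : Matrix n n ℝ) (hA : A.IsHermitian) :
    (A * A).trace = ∑ i, hA.eigenvalues i ^ 2 := by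
  have h1 : star (hA.eigenvectorUnitary : Matrix n n ℝ) * (hA.eigenvectorUnitary : Matrix n n ℝ) = 1 :=
    Matrix.UnitaryGroup.star_mul_self hA.eigenvectorUnitary
  set U : Matrix n n ℝ := (hA.eigenvectorUnitary : Matrix n n ℝ)
  set D : Matrix n n ℝ := Matrix.diagonal (RCLike.ofReal ∘ hA.eigenvalues)
  have hAA : A * A = U * (D * D) * star U := by
    conv_lhs => rw [hA.spectral_theorem]
    calc (U * D * star U) * (U * D * star U) = U * D * (star U * U) * (D * star U) := by
          noncomm_ring
      _ = U * (D * D) * star U := by rw [h1]; noncomm_ring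
  rw [hAA, Matrix.trace_mul_cycle, ← Matrix.mul_assoc, h1, Matrix.one_mul]
  have : D * D = Matrix.diagonal (fun i => hA.eigenvalues i ^ 2) := by
    rw [Matrix.diagonal_mul_diagonal]
    funext i; simp [sq]
  rw [this, Matrix.trace_diagonal]

/-- Ozeki-type bound:
`LE_ε(G) ≥ √(n·E_1(G) - ζ(G)^2 + 2mn - (n²/4)(ν'_max - ν'_min)²)`. -/
theorem eccLaplacianEnergy_ozeki_lower_bound
    {V : Type*} [Fintype V] [DecidableEq V]
    (G : SimpleGraph V) [DecidableRel G.Adj] (hG : G.Connected)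
    (ecc : V → ℕ) (hecc : ∀ v, ecc v = Finset.univ.sup fun u => G.dist v u)
    (m : ℕ) (hm : m = G.edgeFinset.card)
    (L : Matrix V V ℝ)
    (hL : L = Matrix.diagonal (fun v => (ecc v : ℝ)) - G.adjMatrix ℝ)
    (hH : L.IsHermitian)
    (ν : V → ℝ)
    (hν : ∀ v, ν v = hH.eigenvalues v - (∑ u, (ecc u : ℝ)) / Fintype.card V)
    (νmax νmin : ℝ)
    (hmax : IsGreatest (Set.range fun v => |ν v|) νmax)
    (hmin : IsLeast (Set.range fun v => |ν v|) νmin) :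
    ∑ v, |ν v| ≥
      Real.sqrt ((Fintype.card V : ℝ) * (∑ v, (ecc v : ℝ) ^ 2)
        - (∑ v, (ecc v : ℝ)) ^ 2 + 2 * m * Fintype.card V
        - ((Fintype.card V : ℝ) ^ 2 / 4) * (νmax - νmin) ^ 2) := by
  have hne : Nonempty V := hG.nonempty
  set n : ℝ := (Fintype.card V : ℝ) with hn
  have hnpos : (0:ℝ) < n := Nat.cast_pos.mpr Fintype.card_pos
  set ζ : ℝ := ∑ u, (ecc u : ℝ) with hζ
  set μ : V → ℝ := hH.eigenvalues with hμ
  -- trace L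
  have htr : ∑ v, μ v = ζ := by
    rw [← trace_eq_sum_eigs L hH, hL, Matrix.trace_sub, SimpleGraph.trace_adjMatrix,
      Matrix.trace_diagonal, sub_zero]
  -- trace L²
  have htr2 : ∑ v, μ v ^ 2 = ∑ v, (ecc v : ℝ) ^ 2 + 2 * m := by
    rw [← trace_sq_eq_sum_eigs_sq L hH, hL]
    have hexp : (Matrix.diagonal (fun v => (ecc v : ℝ)) - G.adjMatrix ℝ) *
        (Matrix.diagonal (fun v => (ecc v : ℝ)) - G.adjMatrix ℝ)
        = Matrix.diagonal (fun v => (ecc v : ℝ)) * Matrix.diagonal (fun v => (ecc v : ℝ))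
          - Matrix.diagonal (fun v => (ecc v : ℝ)) * G.adjMatrix ℝ
          - G.adjMatrix ℝ * Matrix.diagonal (fun v => (ecc v : ℝ))
          + G.adjMatrix ℝ * G.adjMatrix ℝ := by noncomm_ring
    rw [hexp, Matrix.trace_add, Matrix.trace_sub, Matrix.trace_sub]
    have h1 : (Matrix.diagonal (fun v => (ecc v : ℝ)) *
        Matrix.diagonal (fun v => (ecc v : ℝ))).trace = ∑ v, (ecc v : ℝ) ^ 2 := by
      rw [Matrix.diagonal_mul_diagonal, Matrix.trace_diagonal]
      simp [sq]
    have h2 : (Matrix.diagonal (fun v => (ecc v : ℝ)) * G.adjMatrix ℝ).trace = 0 := by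
      rw [Matrix.trace]
      refine Finset.sum_eq_zero fun i _ => ?_
      rw [Matrix.diag_apply, Matrix.diagonal_mul, SimpleGraph.adjMatrix_apply,
        if_neg (G.loopless.irrefl i), mul_zero]
    have h3 : (G.adjMatrix ℝ * Matrix.diagonal (fun v => (ecc v : ℝ))).trace = 0 := by
      rw [Matrix.trace]
      refine Finset.sum_eq_zero fun i _ => ?_
      rw [Matrix.diag_apply, Matrix.mul_diagonal, SimpleGraph.adjMatrix_apply,
        if_neg (G.loopless.irrefl i), zero_mul]
    have h4 : (G.adjMatrix ℝ * G.adjMatrix ℝ).trace = 2 * m := by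
      rw [Matrix.trace]
      have hdd : ∀ i ∈ Finset.univ, (G.adjMatrix ℝ * G.adjMatrix ℝ).diag i = (G.degree i : ℝ) := by
        intro i _
        rw [Matrix.diag_apply]
        exact G.adjMatrix_mul_self_apply_self i
      rw [Finset.sum_congr rfl hdd, ← Nat.cast_sum, G.sum_degrees_eq_twice_card_edges, hm]
      push_cast
      ring
    rw [h1, h2, h3, h4]; ring
  -- sum of squares of ν
  set S : ℝ := ∑ v, |ν v| with hS
  set Q : ℝ := ∑ v, ν v ^ 2 with hQ
  have hQval : n * Q = n * (∑ v, (ecc v : ℝ) ^ 2) - ζ ^ 2 + 2 * m * n := by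
    have hQ2 : Q = ∑ v, (μ v ^ 2 - 2 * (ζ / n) * μ v + (ζ / n) ^ 2) := by
      rw [hQ]
      refine Finset.sum_congr rfl fun v _ => ?_
      rw [hν v]; ring
    rw [hQ2, Finset.sum_add_distrib, Finset.sum_sub_distrib, ← Finset.mul_sum, htr2, htr,
      Finset.sum_const, Finset.card_univ, nsmul_eq_mul]
    field_simp
    ring
  -- pointwise Ozeki-type bound
  have hptsum : Q ≤ (νmax + νmin) * S - n * (νmax * νmin) := by
    have hpt : ∀ v, ν v ^ 2 ≤ (νmax + νmin) * |ν v| - νmax * νmin := by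
      intro v
      have h1 : |ν v| ≤ νmax := hmax.2 ⟨v, rfl⟩
      have h2 : νmin ≤ |ν v| := hmin.2 ⟨v, rfl⟩
      have := mul_nonneg (sub_nonneg.2 h1) (sub_nonneg.2 h2)
      have habs : ν v ^ 2 = |ν v| ^ 2 := (sq_abs _).symm
      nlinarith
    calc Q ≤ ∑ v, ((νmax + νmin) * |ν v| - νmax * νmin) :=
          Finset.sum_le_sum fun v _ => hpt v
      _ = (νmax + νmin) * S - n * (νmax * νmin) := by
          rw [Finset.sum_sub_distrib, ← Finset.mul_sum, Finset.sum_const, Finset.card_univ,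
            nsmul_eq_mul]
  have hSnn : 0 ≤ S := Finset.sum_nonneg fun v _ => abs_nonneg _
  have hkey : n * (∑ v, (ecc v : ℝ) ^ 2) - ζ ^ 2 + 2 * m * n
      - (n ^ 2 / 4) * (νmax - νmin) ^ 2 ≤ S ^ 2 := by
    rw [← hQval]
    nlinarith [sq_nonneg (n * (νmax + νmin) / 2 - S), hnpos.le]
  calc Real.sqrt (n * (∑ v, (ecc v : ℝ) ^ 2) - ζ ^ 2 + 2 * m * n
        - (n ^ 2 / 4) * (νmax - νmin) ^ 2)
      ≤ Real.sqrt (S ^ 2) := Real.sqrt_le_sqrt hkey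
    _ = S := by rw [Real.sqrt_sq hSnn]
end
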